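/- (S_start, S_start, [0, ∞), [0, ∞))↓ holds: in SSynch with rigid movements, two finite-state robots running Algorithm 1, both starting in state S_start, solve Rendezvous from every pair of initial positions in ℝ², for every pair of unit distances u_r, u_s > 0, every pair of local orthogonal coordinate frames, and every fair schedule. In particular, Rendezvous of two finite-state robots in SSynch is solvable with six internal states, even without unit distance agreement. -/

import Mathlib

/-- Points in the plane. -/
abbrev Pt := EuclideanSpace ℝ (Fin 2)

/-- Observed directions. -/
inductive Dir | left | right
deriving DecidableEq

/-- The six internal states of Algorithm 1. -/
inductive St | start | s1 | s2 (d : Dir) | s3 | finish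
deriving DecidableEq

/-- A local coordinate frame: an orthogonal linear map of the plane. -/
abbrev Frame := Pt ≃ₗᵢ[ℝ] Pt

/-- Observed direction of a local vector `v`: `right` if its first coordinate is
positive, or is zero with positive second coordinate; `left` otherwise. -/
noncomputable def obsDir (v : Pt) : Dir :=
  if 0 < v 0 ∨ (v 0 = 0 ∧ 0 < v 1) then Dir.right else Dir.left

/-- Local vector observed by a robot with unit distance `u` and frame `A`,
located at `p`, looking at the other robot at `q`. -/
noncomputable def obsVec (u : ℝ) (A : Frame) (p q : Pt) : Pt := u⁻¹ • (A (q - p))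

/-- Observed distance. -/
noncomputable def obsDist (u : ℝ) (p q : Pt) : ℝ := ‖q - p‖ / u

/-- Algorithm 1: given the current state, the observed distance `d` and the
observed direction `dir`, returns the new state and the coefficient `μ` such
that the (global) destination is `p + μ • (q - p)` (i.e. local destination `μ • v`). -/
noncomputable def algo1 (s : St) (d : ℝ) (dir : Dir) : St × ℝ :=
  if d = 0 then (s, 0)
  else match s with
  | .start => if d < 1 then (.s1, 1 - 1/d) else (.s2 dir, 1)
  | .s1 => if d ≤ 1 then (.finish, 0) else (.s2 dir, 1)
  | .s2 d' =>
      if dir = d' then (.finish, 1)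
      else if d < 1/2 then (.finish, 0)
      else if d < 1 then (.s3, 1/2)
      else (.s2 d', 1/2)
  | .s3 => if d < 1/4 then (.finish, 0) else (.finish, 1)
  | .finish => if d ≤ 1 then (.finish, 0) else (.finish, 1)

/-- A configuration: positions and internal states of the two robots
(robot `r` is `false`, robot `s` is `true`). -/
structure Config where
  pos : Bool → Pt
  st : Bool → St

/-- Result (new position, new state) of one activation of robot `i`. -/
noncomputable def stepRobot (u : Bool → ℝ) (A : Bool → Frame) (c : Config) (i : Bool) :
    Pt × St :=
  let p := c.pos i
  let q := c.pos (!i)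
  let d := obsDist (u i) p q
  let dir := obsDir (obsVec (u i) (A i) p q)
  let r := algo1 (c.st i) d dir
  (p + r.2 • (q - p), r.1)

/-- One synchronous round in which exactly the robots `i` with `act i = true`
are activated; both activated robots observe the same (pre-round) configuration,
and rigidly reach their computed destinations. -/
noncomputable def stepConfig (u : Bool → ℝ) (A : Bool → Frame) (act : Bool → Bool)
    (c : Config) : Config where
  pos i := if act i then (stepRobot u A c i).1 else c.pos i
  st i := if act i then (stepRobot u A c i).2 else c.st i

/-- The configuration after `n` rounds of the SSynch execution of Algorithm 1
under schedule `sched`, starting from `c0`. -/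
noncomputable def run (u : Bool → ℝ) (A : Bool → Frame) (sched : ℕ → Bool → Bool)
    (c0 : Config) : ℕ → Config
  | 0 => c0
  | n + 1 => stepConfig u A (sched n) (run u A sched c0 n)

/-- A legal fair SSynch schedule: at every round a nonempty set of robots is
activated, and each robot is activated infinitely often. -/
def FairSched (sched : ℕ → Bool → Bool) : Prop :=
  (∀ n, sched n false = true ∨ sched n true = true) ∧
  (∀ i n, ∃ m, n ≤ m ∧ sched m i = true)

/-- Rendezvous is solved: from some round on, the two robots occupy the same
point and never move again. -/
noncomputable def Solves (u : Bool → ℝ) (A : Bool → Frame) (sched : ℕ → Bool → Bool)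
    (c0 : Config) : Prop :=
  ∃ N : ℕ, ∀ n, N ≤ n → ∀ i, (run u A sched c0 n).pos i = (run u A sched c0 N).pos false

/-- Conditions on a robot: one of the six internal states, or `S₂⁼` / `S₂≠`. -/
inductive Cond | start | s1 | s2 (d : Dir) | s2eq | s2ne | s3 | finish

/-- A robot in state `s` whose currently observed direction is `dir`
satisfies the condition. -/
def Cond.sat : Cond → St → Dir → Prop
  | .start, s, _ => s = .start
  | .s1, s, _ => s = .s1
  | .s2 d', s, _ => s = .s2 d'
  | .s2eq, s, dir => s = .s2 dir
  | .s2ne, s, dir => ∃ d', s = St.s2 d' ∧ d' ≠ dir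
  | .s3, s, _ => s = .s3
  | .finish, s, _ => s = .finish

/-- `(S_a, S_b, I_a, I_b)↓` : for every choice of the units and frames, from
every configuration in which robot `r` satisfies condition `Ca` with observed
distance in `Ia` and robot `s` satisfies condition `Cb` with observed distance
in `Ib`, every fair SSynch execution of Algorithm 1 solves Rendezvous. -/
noncomputable def Down (Ca Cb : Cond) (Ia Ib : Set ℝ) : Prop :=
  ∀ (u : Bool → ℝ) (A : Bool → Frame), (∀ i, 0 < u i) →
    ∀ c0 : Config,
      Ca.sat (c0.st false)
        (obsDir (obsVec (u false) (A false) (c0.pos false) (c0.pos true))) →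
      obsDist (u false) (c0.pos false) (c0.pos true) ∈ Ia →
      Cb.sat (c0.st true)
        (obsDir (obsVec (u true) (A true) (c0.pos true) (c0.pos false))) →
      obsDist (u true) (c0.pos true) (c0.pos false) ∈ Ib →
      ∀ sched : ℕ → Bool → Bool, FairSched sched → Solves u A sched c0

/-!
The two robots always stay on the line through their initial positions: each one sees the
other at a distance proportional to the coefficient `l` of their relative position, and in
one of two directions according to the sign of `l`. So the execution is simulated by two
states and one real number, and rendezvous means `l = 0`. In that model a case analysis over
the reachable pairs of states shows that every step either brings the robots together, or
strictly advances the pair of states, or halves the distance while a robot stays in `S_2`;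
the last happens only finitely often, as a robot stays in `S_2` only at distance at least
`1`. Steps activating only an idle robot change nothing, and fairness then forces the other
robot to act.
-/

theorem induction_of_halving {motive : ℝ → Prop}
    (step : ∀ t, (1 ≤ t → motive (t / 2)) → motive t) (t : ℝ) : motive t := by
  suffices ∀ n : ℕ, ∀ t : ℝ, t < 2 ^ n → motive t by
    obtain ⟨n, hn⟩ := pow_unbounded_of_one_lt t one_lt_two
    exact this n t hn
  intro n
  induction n with
  | zero => exact fun t ht => step t fun h => absurd ht (by simpa using h)
  | succ n ih => exact fun t ht => step t fun _ => ih _ (by rw [pow_succ] at ht; linarith)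

def Dir.flip : Dir → Dir
  | .left => .right
  | .right => .left

theorem Dir.flip_ne (e : Dir) : e.flip ≠ e := by cases e <;> decide

theorem Dir.eq_flip_of_ne {d e : Dir} (h : d ≠ e) : d = e.flip := by
  cases d <;> cases e <;> simp_all [Dir.flip]

/-- An activated robot in such a situation stays where it is and switches to `S_finish`. -/
inductive Settles : St → ℝ → Dir → Prop
  | s1 {d : ℝ} {dir : Dir} : d ≤ 1 → Settles .s1 d dir
  | s2 {d : ℝ} {dir d' : Dir} : d' ≠ dir → d < 1 / 2 → Settles (.s2 d') d dir
  | s3 {d : ℝ} {dir : Dir} : d < 1 / 4 → Settles .s3 d dir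
  | finish {d : ℝ} {dir : Dir} : d ≤ 1 → Settles .finish d dir

/-- An activated robot in such a situation moves onto the other robot. -/
inductive Hits : St → ℝ → Dir → Prop
  | s1 {d : ℝ} {dir : Dir} : 1 < d → Hits .s1 d dir
  | s2 {d : ℝ} {dir : Dir} : Hits (.s2 dir) d dir
  | s3 {d : ℝ} {dir : Dir} : 1 / 4 ≤ d → Hits .s3 d dir
  | finish {d : ℝ} {dir : Dir} : 1 < d → Hits .finish d dir

section algo1

variable {d : ℝ} {dir d' : Dir}

theorem Settles.le_one {s : St} (h : Settles s d dir) : d ≤ 1 := by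
  cases h <;> linarith

theorem algo1_zero (s : St) (dir : Dir) : algo1 s 0 dir = (s, 0) := by simp [algo1]

theorem algo1_of_settles {s : St} (hd : 0 < d) (h : Settles s d dir) :
    algo1 s d dir = (.finish, 0) := by
  cases h with
  | s2 hne h => simp [algo1, hd.ne', Ne.symm hne, show d < 2⁻¹ by linarith]
  | s3 h => simp [algo1, hd.ne', show d < 4⁻¹ by linarith]
  | _ h => simp [algo1, hd.ne', h]

theorem algo1_s3_of_quarter_le (hd : 0 < d) (h : 1 / 4 ≤ d) :
    algo1 .s3 d dir = (.finish, 1) := by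
  simp [algo1, hd.ne', show ¬ d < 4⁻¹ by norm_num at h ⊢; linarith]

theorem algo1_of_hits {s : St} (hd : 0 < d) (h : Hits s d dir) : (algo1 s d dir).2 = 1 := by
  cases h with
  | s2 => simp [algo1, hd.ne']
  | s3 h => rw [algo1_s3_of_quarter_le hd h]
  | _ h => simp [algo1, hd.ne', not_le.2 h]

theorem algo1_start_of_lt_one (hd : 0 < d) (h : d < 1) :
    algo1 .start d dir = (.s1, 1 - 1 / d) := by simp [algo1, hd.ne', h]

theorem algo1_start_of_one_le (hd : 0 < d) (h : 1 ≤ d) :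
    algo1 .start d dir = (.s2 dir, 1) := by simp [algo1, hd.ne', not_lt.2 h]

theorem algo1_s1_of_one_lt (hd : 0 < d) (h : 1 < d) :
    algo1 .s1 d dir = (.s2 dir, 1) := by simp [algo1, hd.ne', not_le.2 h]

theorem algo1_s2_of_ne (hd : 0 < d) (hne : d' ≠ dir) :
    (algo1 (.s2 d') d dir = (.finish, 0) ∧ d < 1 / 2) ∨
    (algo1 (.s2 d') d dir = (.s3, 1 / 2) ∧ 1 / 2 ≤ d ∧ d < 1) ∨
    (algo1 (.s2 d') d dir = (.s2 d', 1 / 2) ∧ 1 ≤ d) := by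
  rcases lt_or_ge d (1 / 2) with h1 | h1
  · exact .inl ⟨algo1_of_settles hd (.s2 hne h1), h1⟩
  rcases lt_or_ge d 1 with h2 | h2
  · refine .inr (.inl ⟨?_, h1, h2⟩)
    simp [algo1, hd.ne', Ne.symm hne, h2, show ¬ d < 2⁻¹ by norm_num at h1 ⊢; linarith]
  · refine .inr (.inr ⟨?_, h2⟩)
    simp [algo1, hd.ne', Ne.symm hne, not_lt.2 h2, show ¬ d < 2⁻¹ by linarith]

end algo1

theorem FairSched.shift {sched : ℕ → Bool → Bool} (h : FairSched sched) (k : ℕ) :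
    FairSched (fun n => sched (k + n)) := by
  refine ⟨fun n => h.1 (k + n), fun i n => ?_⟩
  obtain ⟨m, hm, hact⟩ := h.2 i (k + n)
  exact ⟨m - k, by omega, by simpa only [Nat.add_sub_cancel' (by omega : k ≤ m)]⟩

theorem FairSched.swap {sched : ℕ → Bool → Bool} (h : FairSched sched) :
    FairSched (fun n i => sched n (!i)) :=
  ⟨fun n => (h.1 n).symm, fun i => h.2 (!i)⟩

/-- Two robots on a line, recorded by the coefficient `l` of their relative position
(in a line configuration `(a, b, l)`, `a` and `b` are the states of robots `r = false` and
`s = true`): robot `i` observes the distance `c i * |l|`, and the direction `e i` when `l > 0`,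
the opposite one when `l < 0`. -/
structure LineModel where
  c : Bool → ℝ
  e : Bool → Dir
  c_pos : ∀ i, 0 < c i

noncomputable section

namespace LineModel

variable (M : LineModel)

def dist (i : Bool) (l : ℝ) : ℝ := M.c i * |l|

def dir (i : Bool) (l : ℝ) : Dir := if 0 < l then M.e i else (M.e i).flip

def move (i : Bool) (s : St) (l : ℝ) : St × ℝ := algo1 s (M.dist i l) (M.dir i l)

def step (act : Bool → Bool) (x : St × St × ℝ) : St × St × ℝ :=
  (if act false then (M.move false x.1 x.2.2).1 else x.1,
   if act true then (M.move true x.2.1 x.2.2).1 else x.2.1,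
   (1 - (if act false then (M.move false x.1 x.2.2).2 else 0)
      - (if act true then (M.move true x.2.1 x.2.2).2 else 0)) * x.2.2)

def run (sched : ℕ → Bool → Bool) (x : St × St × ℝ) : ℕ → St × St × ℝ
  | 0 => x
  | n + 1 => M.step (sched n) (run sched x n)

def Meets (x : St × St × ℝ) : Prop :=
  ∀ sched, FairSched sched → ∃ n, (M.run sched x n).2.2 = 0

def swap : LineModel := ⟨fun i => M.c (!i), fun i => M.e (!i), fun i => M.c_pos (!i)⟩

variable {M} {i : Bool} {a b a' b' : St} {d d₁ d₂ : Dir} {l μ μ' : ℝ}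

theorem dist_pos (M : LineModel) (i : Bool) (hl : l ≠ 0) : 0 < M.dist i l :=
  mul_pos (M.c_pos i) (abs_pos.2 hl)

theorem dist_mul (t l : ℝ) : M.dist i (t * l) = |t| * M.dist i l := by
  simp only [dist, abs_mul]; ring

theorem dir_mul_of_pos {t : ℝ} (ht : 0 < t) (l : ℝ) : M.dir i (t * l) = M.dir i l := by
  simp only [dir, mul_pos_iff_of_pos_left ht]

theorem dir_mul_of_neg {t : ℝ} (ht : t < 0) (hl : l ≠ 0) :
    M.dir i (t * l) = (M.dir i l).flip := by
  rcases hl.lt_or_gt with hl | hl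
  · simp [dir, mul_pos_of_neg_of_neg ht hl, not_lt.2 hl.le, Dir.flip]
    cases M.e i <;> rfl
  · simp [dir, hl, not_lt.2 (mul_neg_of_neg_of_pos ht hl).le]

theorem step_of_move (hr : M.move false a l = (a', μ)) (hs : M.move true b l = (b', μ'))
    (act : Bool → Bool) :
    M.step act (a, b, l) = (if act false then a' else a, if act true then b' else b,
      (1 - (if act false then μ else 0) - (if act true then μ' else 0)) * l) := by
  simp only [step, hr, hs]

theorem move_s2_of_ne (hl : l ≠ 0) (hne : d ≠ M.dir i l) :
    (M.move i (.s2 d) l = (.finish, 0) ∧ M.dist i l < 1 / 2) ∨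
    (M.move i (.s2 d) l = (.s3, 1 / 2) ∧ 1 / 2 ≤ M.dist i l ∧ M.dist i l < 1) ∨
    (M.move i (.s2 d) l = (.s2 d, 1 / 2) ∧ 1 ≤ M.dist i l) :=
  algo1_s2_of_ne (M.dist_pos i hl) hne

theorem move_s2_snd_of_half_le (hl : l ≠ 0) (hne : d ≠ M.dir i l) (h : 1 / 2 ≤ M.dist i l) :
    (M.move i (.s2 d) l).2 = 1 / 2 := by
  rcases move_s2_of_ne hl hne with ⟨-, h'⟩ | ⟨hm, -⟩ | ⟨hm, -⟩
  · linarith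
  all_goals rw [hm]

theorem run_add (sched : ℕ → Bool → Bool) (x : St × St × ℝ) (k n : ℕ) :
    M.run sched x (k + n) = M.run (fun m => sched (k + m)) (M.run sched x k) n := by
  induction n with
  | zero => rfl
  | succ n ih => exact congrArg (M.step _) ih

theorem meets_of_eq_zero (hl : l = 0) : M.Meets (a, b, l) := fun _ _ => ⟨0, hl⟩

theorem exists_run_eq_zero {sched : ℕ → Bool → Bool} (hf : FairSched sched)
    {x : St × St × ℝ} (k : ℕ) (h : M.Meets (M.run sched x k)) :
    ∃ n, (M.run sched x n).2.2 = 0 := by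
  obtain ⟨n, hn⟩ := h _ (hf.shift k)
  exact ⟨k + n, by rwa [run_add]⟩

theorem meets_of_step {x : St × St × ℝ}
    (h : ∀ act : Bool → Bool, act false = true ∨ act true = true → M.Meets (M.step act x)) :
    M.Meets x :=
  fun _ hf => exists_run_eq_zero hf 1 (h _ (hf.1 0))

theorem meets_of_idle {x : St × St × ℝ} (i : Bool)
    (hidle : ∀ act : Bool → Bool, act i = false → M.step act x = x)
    (h : ∀ act : Bool → Bool, act i = true → M.Meets (M.step act x)) : M.Meets x := by
  intro sched hf
  have hex : ∃ m, sched m i = true := (hf.2 i 0).imp fun _ hm => hm.2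
  have hstay : ∀ k ≤ Nat.find hex, M.run sched x k = x := by
    intro k
    induction k with
    | zero => exact fun _ => rfl
    | succ k ih =>
      intro hk
      rw [run, ih (by omega)]
      exact hidle _ (Bool.not_eq_true _ ▸ Nat.find_min hex (by omega))
  refine exists_run_eq_zero hf (Nat.find hex + 1) ?_
  rw [run, hstay _ le_rfl]
  exact h _ (Nat.find_spec hex)

theorem meets_of_moves (hr : M.move false a l = (a', μ)) (hs : M.move true b l = (b', μ'))
    (hr_only : M.Meets (a', b, (1 - μ) * l)) (hs_only : M.Meets (a, b', (1 - μ') * l))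
    (hboth : M.Meets (a', b', (1 - μ - μ') * l)) : M.Meets (a, b, l) := by
  refine meets_of_step fun act hact => ?_
  rw [step_of_move hr hs]
  cases hF : act false <;> cases hT : act true <;> simp_all

theorem meets_of_r_idle (hr : M.move false a l = (a, 0)) (hs : M.move true b l = (b', μ'))
    (h : M.Meets (a, b', (1 - μ') * l)) : M.Meets (a, b, l) := by
  refine meets_of_idle true (fun act hT => ?_) (fun act hT => ?_) <;>
    rw [step_of_move hr hs] <;> cases act false <;> simp_all

theorem swap_move (i : Bool) (s : St) (l : ℝ) : M.swap.move i s l = M.move (!i) s l := rfl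

theorem step_swap (act : Bool → Bool) (a b : St) (l : ℝ) :
    M.swap.step (fun i => act (!i)) (b, a, l) =
      ((M.step act (a, b, l)).2.1, (M.step act (a, b, l)).1, (M.step act (a, b, l)).2.2) := by
  simp only [step, swap_move, Bool.not_false, Bool.not_true, Prod.mk.injEq, true_and]
  ring

theorem run_swap (sched : ℕ → Bool → Bool) (a b : St) (l : ℝ) (n : ℕ) :
    M.swap.run (fun n i => sched n (!i)) (b, a, l) n =
      ((M.run sched (a, b, l) n).2.1, (M.run sched (a, b, l) n).1,
        (M.run sched (a, b, l) n).2.2) := by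
  induction n with
  | zero => rfl
  | succ n ih => rw [run, ih, step_swap]; rfl

theorem meets_of_swap (h : M.swap.Meets (b, a, l)) : M.Meets (a, b, l) := by
  intro sched hf
  obtain ⟨n, hn⟩ := h _ hf.swap
  exact ⟨n, by rwa [run_swap] at hn⟩

theorem meets_of_settles_of_hits (hl : l ≠ 0) (ha : Settles a (M.dist false l) (M.dir false l))
    (hb : Hits b (M.dist true l) (M.dir true l)) : M.Meets (a, b, l) := by
  have hr : M.move false a l = (.finish, 0) := algo1_of_settles (M.dist_pos _ hl) ha
  have hr' : M.move false .finish l = (.finish, 0) :=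
    algo1_of_settles (M.dist_pos _ hl) (.finish ha.le_one)
  have hs : M.move true b l = ((M.move true b l).1, 1) :=
    Prod.ext rfl (algo1_of_hits (M.dist_pos _ hl) hb)
  refine meets_of_moves hr hs ?_ (meets_of_eq_zero (by ring)) (meets_of_eq_zero (by ring))
  rw [sub_zero, one_mul]
  exact meets_of_r_idle hr' hs (meets_of_eq_zero (by ring))

theorem meets_of_hits_of_settles (hl : l ≠ 0) (ha : Hits a (M.dist false l) (M.dir false l))
    (hb : Settles b (M.dist true l) (M.dir true l)) : M.Meets (a, b, l) :=
  meets_of_swap (M.swap.meets_of_settles_of_hits hl hb ha)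

theorem meets_finish_s2 (hl : l ≠ 0) (hr : M.dist false l ≤ 1) (hne : d ≠ M.dir true l)
    (hs : 1 / 2 ≤ M.dist true l) : M.Meets (.finish, .s2 d, l) := by
  obtain ⟨t, ht⟩ : ∃ t, M.dist true l = t := ⟨_, rfl⟩
  induction t using induction_of_halving generalizing l with
  | step t ih =>
  have hl2 : (1 - 1 / 2) * l ≠ 0 := by positivity
  have hr0 : M.move false .finish l = (.finish, 0) :=
    algo1_of_settles (M.dist_pos false hl) (.finish hr)
  rcases move_s2_of_ne hl hne with ⟨-, hs'⟩ | ⟨hm, -, hs1⟩ | ⟨hm, hs1⟩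
  · linarith
  · refine meets_of_r_idle hr0 hm (meets_of_settles_of_hits hl2 (.finish ?_) (.s3 ?_)) <;>
      rw [dist_mul] <;> norm_num <;> linarith
  · refine meets_of_r_idle hr0 hm (ih (by linarith) hl2 ?_ ?_ ?_ ?_)
    · rw [dist_mul]; norm_num; linarith
    · rwa [dir_mul_of_pos (by norm_num)]
    · rw [dist_mul]; norm_num; linarith
    · rw [dist_mul, ht]; norm_num; ring

theorem meets_s3_s2_of_lt_quarter (hl : l ≠ 0) (hr : M.dist false l < 1 / 4)
    (hne : d ≠ M.dir true l) (hs : 1 / 2 ≤ M.dist true l) : M.Meets (.s3, .s2 d, l) := by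
  obtain ⟨t, ht⟩ : ∃ t, M.dist true l = t := ⟨_, rfl⟩
  induction t using induction_of_halving generalizing l with
  | step t ih =>
  have hl2 : (1 - 1 / 2) * l ≠ 0 := by positivity
  have hr0 : M.move false .s3 l = (.finish, 0) := algo1_of_settles (M.dist_pos false hl) (.s3 hr)
  have hr_only : M.Meets (.finish, .s2 d, (1 - 0) * l) := by
    rw [sub_zero, one_mul]; exact meets_finish_s2 hl (by linarith) hne hs
  rcases move_s2_of_ne hl hne with ⟨-, hs'⟩ | ⟨hm, -, hs1⟩ | ⟨hm, hs1⟩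
  · linarith
  · refine meets_of_moves hr0 hm hr_only ?_ ?_
    · refine meets_of_settles_of_hits hl2 (.s3 ?_) (.s3 ?_) <;>
        rw [dist_mul] <;> norm_num <;> linarith
    · rw [sub_zero]
      refine meets_of_settles_of_hits hl2 (.finish ?_) (.s3 ?_) <;>
        rw [dist_mul] <;> norm_num <;> linarith
  · have hne' : d ≠ M.dir true ((1 - 1 / 2) * l) := by rwa [dir_mul_of_pos (by norm_num)]
    have hs2 : 1 / 2 ≤ M.dist true ((1 - 1 / 2) * l) := by rw [dist_mul]; norm_num; linarith
    refine meets_of_moves hr0 hm hr_only (ih (ht ▸ hs1) hl2 ?_ hne' hs2 ?_) ?_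
    · rw [dist_mul]; norm_num; linarith
    · rw [dist_mul, ht]; norm_num; ring
    · rw [sub_zero]
      exact meets_finish_s2 hl2 (by rw [dist_mul]; norm_num; linarith) hne' hs2

theorem meets_s3_s2_of_quarter_le (hl : l ≠ 0) (hr : 1 / 4 ≤ M.dist false l)
    (hr' : M.dist false l < 1 / 2) (hne : d ≠ M.dir true l) : M.Meets (.s3, .s2 d, l) := by
  have hl2 : (1 - 1 / 2) * l ≠ 0 := by positivity
  have hr1 : M.move false .s3 l = (.finish, 1) :=
    algo1_s3_of_quarter_le (M.dist_pos false hl) hr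
  have hr_only : M.Meets (.finish, .s2 d, (1 - 1) * l) := meets_of_eq_zero (by ring)
  rcases move_s2_of_ne hl hne with ⟨hm, hs⟩ | ⟨hm, hs, hs'⟩ | ⟨hm, hs⟩
  · refine meets_of_moves hr1 hm hr_only ?_ (meets_of_eq_zero (by ring))
    rw [sub_zero, one_mul]
    exact meets_of_hits_of_settles hl (.s3 hr) (.finish (by linarith))
  · refine meets_of_moves hr1 hm hr_only ?_ ?_
    · refine meets_of_settles_of_hits hl2 (.s3 ?_) (.s3 ?_) <;>
        rw [dist_mul] <;> norm_num <;> linarith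
    · refine meets_of_settles_of_hits (by positivity) (.finish ?_) (.s3 ?_) <;>
        rw [dist_mul] <;> norm_num <;> linarith
  · refine meets_of_moves hr1 hm hr_only ?_ ?_
    · refine meets_s3_s2_of_lt_quarter hl2 ?_ (by rwa [dir_mul_of_pos (by norm_num)]) ?_ <;>
        rw [dist_mul] <;> norm_num <;> linarith
    · refine meets_of_settles_of_hits (by positivity) (.finish ?_) ?_
      · rw [dist_mul]; norm_num; linarith
      · rw [dir_mul_of_neg (by norm_num) hl, ← Dir.eq_flip_of_ne hne]
        exact .s2

theorem meets_s2_s2_step_r (hl : l ≠ 0) (h₁ : d₁ ≠ M.dir false l) (h₂ : d₂ ≠ M.dir true l)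
    (hd : 1 / 2 ≤ M.dist false l ∨ 1 / 2 ≤ M.dist true l)
    (ih : 1 ≤ M.dist false l → M.Meets (.s2 d₁, .s2 d₂, (1 - 1 / 2) * l)) :
    M.Meets ((M.move false (.s2 d₁) l).1, .s2 d₂, (1 - (M.move false (.s2 d₁) l).2) * l) := by
  rcases move_s2_of_ne hl h₁ with ⟨hm, hr⟩ | ⟨hm, hr, hr'⟩ | ⟨hm, hr⟩ <;> rw [hm]
  · rw [sub_zero, one_mul]
    exact meets_finish_s2 hl (by linarith) h₂ (hd.resolve_left (by linarith))
  · refine meets_s3_s2_of_quarter_le (by positivity) ?_ ?_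
      (by rwa [dir_mul_of_pos (by norm_num)]) <;> rw [dist_mul] <;> norm_num <;> linarith
  · exact ih hr

theorem meets_s2_s2_step_both_of_lt_half (hl : l ≠ 0) (hr : M.dist false l < 1 / 2)
    (h₂ : d₂ ≠ M.dir true l) (hs : 1 / 2 ≤ M.dist true l) :
    M.Meets (.finish, (M.move true (.s2 d₂) l).1, (1 - 0 - (M.move true (.s2 d₂) l).2) * l) := by
  have hl2 : (1 - 1 / 2) * l ≠ 0 := by positivity
  rcases move_s2_of_ne hl h₂ with ⟨-, hs'⟩ | ⟨hm, -, hs'⟩ | ⟨hm, hs'⟩ <;> rw [sub_zero]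
  · linarith
  · rw [hm]
    refine meets_of_settles_of_hits hl2 (.finish ?_) (.s3 ?_) <;>
      rw [dist_mul] <;> norm_num <;> linarith
  · rw [hm]
    refine meets_finish_s2 hl2 ?_ (by rwa [dir_mul_of_pos (by norm_num)]) ?_ <;>
      rw [dist_mul] <;> norm_num <;> linarith

theorem meets_s2_s2 (hl : l ≠ 0) (h₁ : d₁ ≠ M.dir false l) (h₂ : d₂ ≠ M.dir true l)
    (hd : 1 / 2 ≤ M.dist false l ∨ 1 / 2 ≤ M.dist true l) : M.Meets (.s2 d₁, .s2 d₂, l) := by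
  obtain ⟨t, ht⟩ : ∃ t, M.dist false l + M.dist true l = t := ⟨_, rfl⟩
  induction t using induction_of_halving generalizing M d₁ d₂ l with
  | step t ih =>
  have halve : ∀ {M : LineModel} {d₁ d₂ : Dir}, d₁ ≠ M.dir false l → d₂ ≠ M.dir true l →
      M.dist false l + M.dist true l = t → 1 ≤ M.dist false l →
      M.Meets (.s2 d₁, .s2 d₂, (1 - 1 / 2) * l) := by
    intro M d₁ d₂ h₁ h₂ ht h1
    have := (M.dist_pos true hl).le
    refine ih (by linarith) (by positivity) ?_ ?_ (.inl ?_) ?_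
    · rwa [dir_mul_of_pos (by norm_num)]
    · rwa [dir_mul_of_pos (by norm_num)]
    · rw [dist_mul]; norm_num; linarith
    · rw [dist_mul, dist_mul, ← ht]; norm_num; ring
  have hr_only := meets_s2_s2_step_r hl h₁ h₂ hd (halve h₁ h₂ ht)
  have hs_only := meets_of_swap (M.swap.meets_s2_s2_step_r hl h₂ h₁ hd.symm
    (halve h₂ h₁ (by rw [← ht, add_comm]; rfl)))
  refine meets_of_moves Prod.mk.eta.symm Prod.mk.eta.symm hr_only hs_only ?_
  rcases lt_or_ge (M.dist false l) (1 / 2) with hr | hr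
  · rw [show M.move false (.s2 d₁) l = (.finish, 0) from
      algo1_of_settles (M.dist_pos false hl) (.s2 h₁ hr)]
    exact meets_s2_s2_step_both_of_lt_half hl hr h₂ (hd.resolve_left (by linarith))
  rcases lt_or_ge (M.dist true l) (1 / 2) with hs | hs
  · rw [show M.move true (.s2 d₂) l = (.finish, 0) from
      algo1_of_settles (M.dist_pos true hl) (.s2 h₂ hs), sub_right_comm]
    exact meets_of_swap (M.swap.meets_s2_s2_step_both_of_lt_half hl hs h₁ hr)
  · refine meets_of_eq_zero ?_
    rw [move_s2_snd_of_half_le hl h₁ hr, move_s2_snd_of_half_le hl h₂ hs]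
    ring

theorem meets_of_moves_eq_s2 (hl : l ≠ 0) (hd : 1 / 2 ≤ M.dist false l)
    (hr : M.move false a l = (.s2 (M.dir false l), 1))
    (hs : M.move true b l = (.s2 (M.dir true l), 1)) : M.Meets (a, b, l) := by
  refine meets_of_moves hr hs (meets_of_eq_zero (by ring)) (meets_of_eq_zero (by ring))
    (meets_s2_s2 (by simpa using hl) ?_ ?_ (.inl ?_))
  · rw [dir_mul_of_neg (by norm_num) hl]; exact (Dir.flip_ne _).symm
  · rw [dir_mul_of_neg (by norm_num) hl]; exact (Dir.flip_ne _).symm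
  · rw [dist_mul]; norm_num; exact hd

theorem meets_s1_s1 (hl : l ≠ 0) (hr : 1 ≤ M.dist false l) (hs : 1 ≤ M.dist true l)
    (h : 1 < M.dist false l ∨ 1 < M.dist true l) : M.Meets (.s1, .s1, l) := by
  rcases hr.eq_or_lt with hr | hr
  · exact meets_of_settles_of_hits hl (.s1 hr.ge) (.s1 (h.resolve_left hr.not_lt))
  rcases hs.eq_or_lt with hs | hs
  · exact meets_of_hits_of_settles hl (.s1 hr) (.s1 hs.ge)
  exact meets_of_moves_eq_s2 hl (by linarith) (algo1_s1_of_one_lt (M.dist_pos false hl) hr)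
    (algo1_s1_of_one_lt (M.dist_pos true hl) hs)

theorem meets_s1_s1_of_lt_one (hl : l ≠ 0) (hr : M.dist false l < 1)
    (hs : M.dist true l < 1) :
    M.Meets (.s1, .s1, (1 / M.dist false l + 1 / M.dist true l - 1) * l) := by
  have hr0 := M.dist_pos false hl
  have hs0 := M.dist_pos true hl
  have hr1 : 1 < 1 / M.dist false l := by rw [lt_div_iff₀ hr0]; simpa
  have hs1 : 1 < 1 / M.dist true l := by rw [lt_div_iff₀ hs0]; simpa
  have hc0 : 0 < 1 / M.dist false l + 1 / M.dist true l - 1 := by linarith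
  have hr' : 1 < M.dist false ((1 / M.dist false l + 1 / M.dist true l - 1) * l) := by
    rw [dist_mul, abs_of_pos hc0, show (1 / M.dist false l + 1 / M.dist true l - 1) *
      M.dist false l = 1 + M.dist false l * (1 / M.dist true l - 1) by field_simp; ring]
    linarith [mul_pos hr0 (sub_pos.2 hs1)]
  have hs' : 1 < M.dist true ((1 / M.dist false l + 1 / M.dist true l - 1) * l) := by
    rw [dist_mul, abs_of_pos hc0, show (1 / M.dist false l + 1 / M.dist true l - 1) *
      M.dist true l = 1 + M.dist true l * (1 / M.dist false l - 1) by field_simp; ring]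
    linarith [mul_pos hs0 (sub_pos.2 hr1)]
  exact meets_s1_s1 (mul_ne_zero hc0.ne' hl) hr'.le hs'.le (.inl hr')

theorem dist_inv_dist_mul (i j : Bool) (hl : l ≠ 0) :
    M.dist j (1 / M.dist i l * l) = M.dist j l / M.dist i l := by
  rw [dist_mul, abs_of_pos (by have := M.dist_pos i hl; positivity)]; ring

theorem meets_finish_start (hl : l ≠ 0) (hr : M.dist false l = 1) :
    M.Meets (.finish, .start, l) := by
  have hr0 : M.move false .finish l = (.finish, 0) :=
    algo1_of_settles (M.dist_pos false hl) (.finish hr.le)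
  have hs0 := M.dist_pos true hl
  rcases lt_or_ge (M.dist true l) 1 with hs | hs
  · refine meets_of_r_idle hr0 (algo1_start_of_lt_one hs0 hs) ?_
    rw [sub_sub_cancel]
    refine meets_of_hits_of_settles (by positivity) (.finish ?_) (.s1 ?_) <;>
      rw [dist_inv_dist_mul _ _ hl]
    · rw [hr, lt_div_iff₀ hs0]; simpa
    · rw [div_self hs0.ne']
  · exact meets_of_r_idle hr0 (algo1_start_of_one_le hs0 hs) (meets_of_eq_zero (by ring))

theorem meets_s1_start (hl : l ≠ 0) (hr : M.dist false l = 1) : M.Meets (.s1, .start, l) := by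
  have hr0 : M.move false .s1 l = (.finish, 0) := algo1_of_settles (M.dist_pos false hl) (.s1 hr.le)
  have hr_only : M.Meets (.finish, .start, (1 - 0) * l) := by
    rw [sub_zero, one_mul]; exact meets_finish_start hl hr
  have hs0 := M.dist_pos true hl
  rcases lt_or_ge (M.dist true l) 1 with hs | hs
  · have hl' : 1 / M.dist true l * l ≠ 0 := by positivity
    have hr' : 1 < M.dist false (1 / M.dist true l * l) := by
      rw [dist_inv_dist_mul _ _ hl, hr, lt_div_iff₀ hs0]; simpa
    have hs' : M.dist true (1 / M.dist true l * l) = 1 := by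
      rw [dist_inv_dist_mul _ _ hl, div_self hs0.ne']
    refine meets_of_moves hr0 (algo1_start_of_lt_one hs0 hs) hr_only ?_ ?_ <;>
      simp only [sub_zero, sub_sub_cancel]
    · exact meets_s1_s1 hl' hr'.le hs'.ge (.inl hr')
    · exact meets_of_hits_of_settles hl' (.finish hr') (.s1 hs'.le)
  · exact meets_of_moves hr0 (algo1_start_of_one_le hs0 hs) hr_only
      (meets_of_eq_zero (by ring)) (meets_of_eq_zero (by ring))

theorem meets_start_start_of_lt_one (hl : l ≠ 0) (hr : M.dist false l < 1) :
    M.Meets (.start, .start, l) := by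
  have hr0 := M.dist_pos false hl
  have hs0 := M.dist_pos true hl
  have hr_only : M.Meets (.s1, .start, (1 - (1 - 1 / M.dist false l)) * l) := by
    rw [sub_sub_cancel]
    exact meets_s1_start (by positivity) (by rw [dist_inv_dist_mul _ _ hl, div_self hr0.ne'])
  have hr1 : 1 < 1 / M.dist false l := by rw [lt_div_iff₀ hr0]; simpa
  rcases lt_or_ge (M.dist true l) 1 with hs | hs
  · refine meets_of_moves (algo1_start_of_lt_one hr0 hr) (algo1_start_of_lt_one hs0 hs) hr_only
      ?_ ?_
    · rw [sub_sub_cancel]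
      exact meets_of_swap (M.swap.meets_s1_start (by positivity)
        (by show M.dist true _ = 1; rw [dist_inv_dist_mul _ _ hl, div_self hs0.ne']))
    · rw [show 1 - (1 - 1 / M.dist false l) - (1 - 1 / M.dist true l) =
        1 / M.dist false l + 1 / M.dist true l - 1 by ring]
      exact meets_s1_s1_of_lt_one hl hr hs
  · refine meets_of_moves (algo1_start_of_lt_one hr0 hr) (algo1_start_of_one_le hs0 hs) hr_only
      (meets_of_eq_zero (by ring)) ?_
    rw [show 1 - (1 - 1 / M.dist false l) - 1 = 1 / M.dist false l - 1 by ring]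
    refine meets_of_settles_of_hits (mul_ne_zero (by linarith) hl) (.s1 ?_) ?_
    · rw [dist_mul, abs_of_pos (by linarith)]; field_simp; linarith
    · rw [dir_mul_of_pos (by linarith)]; exact .s2

theorem meets_start_start (hl : l ≠ 0) : M.Meets (.start, .start, l) := by
  rcases lt_or_ge (M.dist false l) 1 with hr | hr
  · exact meets_start_start_of_lt_one hl hr
  rcases lt_or_ge (M.dist true l) 1 with hs | hs
  · exact meets_of_swap (M.swap.meets_start_start_of_lt_one hl hs)
  exact meets_of_moves_eq_s2 hl (by linarith) (algo1_start_of_one_le (M.dist_pos false hl) hr)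
    (algo1_start_of_one_le (M.dist_pos true hl) hs)

end LineModel

end

theorem obsDir_smul_of_pos {c : ℝ} (hc : 0 < c) (v : Pt) : obsDir (c • v) = obsDir v := by
  simp [obsDir, mul_pos_iff_of_pos_left hc, hc.ne']

theorem obsDir_neg {v : Pt} (hv : v ≠ 0) : obsDir (-v) = (obsDir v).flip := by
  have hv' : v 0 ≠ 0 ∨ v 1 ≠ 0 := by
    by_contra! h
    exact hv (by ext i; fin_cases i <;> simp [h.1, h.2])
  simp only [obsDir, PiLp.neg_apply, neg_pos, neg_eq_zero]
  rcases lt_trichotomy (v 0) 0 with h0 | h0 | h0 <;>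
    rcases lt_trichotomy (v 1) 0 with h1 | h1 | h1 <;>
    simp_all [Dir.flip, lt_asymm, ne_of_gt, ne_of_lt]

theorem obsDir_smul_of_neg {c : ℝ} (hc : c < 0) {v : Pt} (hv : v ≠ 0) :
    obsDir (c • v) = (obsDir v).flip := by
  rw [← neg_neg c, neg_smul, ← smul_neg, obsDir_smul_of_pos (neg_pos.2 hc) (-v), obsDir_neg hv]

noncomputable def lineModel (u : Bool → ℝ) (A : Bool → Frame) (hu : ∀ i, 0 < u i)
    (p : Bool → Pt) (hp : p true ≠ p false) : LineModel where
  c i := ‖p (!i) - p i‖ / u i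
  e i := obsDir (A i (p (!i) - p i))
  c_pos i := div_pos (norm_pos_iff.2 (by cases i <;> simp [sub_eq_zero, hp, hp.symm])) (hu i)

section Plane

variable {u : Bool → ℝ} {A : Bool → Frame} {hu : ∀ i, 0 < u i} {p : Bool → Pt}
  {hp : p true ≠ p false} {sched : ℕ → Bool → Bool} {c0 : Config}

theorem algo1_obs_eq_move {i : Bool} {c : Config} {l : ℝ}
    (h : c.pos (!i) - c.pos i = l • (p (!i) - p i)) (s : St) :
    algo1 s (obsDist (u i) (c.pos i) (c.pos (!i)))
      (obsDir (obsVec (u i) (A i) (c.pos i) (c.pos (!i)))) =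
      (lineModel u A hu p hp).move i s l := by
  have hv : p (!i) - p i ≠ 0 := by cases i <;> simp [sub_eq_zero, hp, hp.symm]
  have hd : obsDist (u i) (c.pos i) (c.pos (!i)) = (lineModel u A hu p hp).dist i l := by
    simp only [obsDist, h, norm_smul, Real.norm_eq_abs, LineModel.dist, lineModel]; ring
  have hvec : obsVec (u i) (A i) (c.pos i) (c.pos (!i)) = ((u i)⁻¹ * l) • A i (p (!i) - p i) := by
    rw [obsVec, h, map_smul, smul_smul]
  rcases lt_trichotomy l 0 with hl | rfl | hl
  · rw [LineModel.move, hd, hvec, obsDir_smul_of_neg (mul_neg_of_pos_of_neg (inv_pos.2 (hu i)) hl)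
      (mt (A i).map_eq_zero_iff.1 hv)]
    simp [LineModel.dir, lineModel, not_lt.2 hl.le]
  · simp [LineModel.move, hd, LineModel.dist, algo1_zero]
  · rw [LineModel.move, hd, hvec, obsDir_smul_of_pos (by have := hu i; positivity)]
    simp [LineModel.dir, lineModel, hl]

def Represents (p : Bool → Pt) (c : Config) (x : St × St × ℝ) : Prop :=
  c.st false = x.1 ∧ c.st true = x.2.1 ∧ c.pos true - c.pos false = x.2.2 • (p true - p false)

theorem Represents.sub_eq {c : Config} {x : St × St × ℝ} (h : Represents p c x) (i : Bool) :
    c.pos (!i) - c.pos i = x.2.2 • (p (!i) - p i) := by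
  cases i
  · exact h.2.2
  · change c.pos false - c.pos true = x.2.2 • (p false - p true)
    rw [← neg_sub, h.2.2, ← smul_neg, neg_sub]

theorem Represents.stepConfig {c : Config} {x : St × St × ℝ} (h : Represents p c x)
    (act : Bool → Bool) :
    Represents p (stepConfig u A act c) ((lineModel u A hu p hp).step act x) := by
  obtain ⟨a, b, l⟩ := x
  have hm : ∀ i, stepRobot u A c i =
      (c.pos i + ((lineModel u A hu p hp).move i (c.st i) l).2 • (c.pos (!i) - c.pos i),
        ((lineModel u A hu p hp).move i (c.st i) l).1) := fun i => by
    simp only [stepRobot]; rw [algo1_obs_eq_move (h.sub_eq i)]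
  obtain ⟨h1, h2, h3⟩ := h
  have hq : c.pos true = c.pos false + l • (p true - p false) := by rw [← h3]; abel
  simp only [Represents, _root_.stepConfig, LineModel.step, hm, h1, h2, Bool.not_false,
    Bool.not_true]
  cases act false <;> cases act true <;>
    simp only [if_true, if_false, Bool.false_eq_true, true_and] <;> rw [hq] <;> module

theorem Represents.run {x : St × St × ℝ} (h : Represents p c0 x) (n : ℕ) :
    Represents p (run u A sched c0 n) ((lineModel u A hu p hp).run sched x n) := by
  induction n with
  | zero => exact h
  | succ n ih => exact ih.stepConfig (sched n)

theorem stepConfig_pos_of_pos_eq {act : Bool → Bool} {c : Config}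
    (h : c.pos true = c.pos false) : (stepConfig u A act c).pos = c.pos := by
  have hi : ∀ i, c.pos (!i) = c.pos i := by intro i; cases i <;> simp [h]
  funext i
  simp [stepConfig, stepRobot, obsDist, hi, algo1_zero]

theorem solves_of_pos_eq {n : ℕ}
    (h : (run u A sched c0 n).pos true = (run u A sched c0 n).pos false) :
    Solves u A sched c0 := by
  have hstay : ∀ m, n ≤ m → (run u A sched c0 m).pos = (run u A sched c0 n).pos := by
    intro m hm
    induction m, hm using Nat.le_induction with
    | base => rfl
    | succ m _ ih =>
      rw [← ih]
      exact stepConfig_pos_of_pos_eq (by rw [ih]; exact h)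
  refine ⟨n, fun m hm i => ?_⟩
  rw [hstay m hm]
  cases i
  · rfl
  · exact h

theorem solves_of_start (hu : ∀ i, 0 < u i) (hr : c0.st false = .start)
    (hs : c0.st true = .start) (hf : FairSched sched) : Solves u A sched c0 := by
  by_cases hp : c0.pos true = c0.pos false
  · exact solves_of_pos_eq (n := 0) hp
  have h0 : Represents c0.pos c0 (.start, .start, 1) := ⟨hr, hs, (one_smul _ _).symm⟩
  obtain ⟨n, hn⟩ := (lineModel u A hu c0.pos hp).meets_start_start one_ne_zero sched hf
  refine solves_of_pos_eq (n := n) (sub_eq_zero.1 ?_)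
  rw [(h0.run (hu := hu) (hp := hp) n).2.2, hn, zero_smul]

end Plane

/-- Theorem: `(S_start, S_start, [0, ∞), [0, ∞))↓`. In SSynch with rigid
movements, two finite-state robots running Algorithm 1, both starting in state
`S_start`, solve Rendezvous from every pair of initial positions, for every
pair of unit distances, every pair of local orthogonal frames, and every fair
schedule: Rendezvous of two `FState` robots in SSynch is solvable with six
internal states, even without unit distance agreement. -/
theorem rendezvous_fstate_ssynch :
    Down Cond.start Cond.start (Set.Ici (0 : ℝ)) (Set.Ici (0 : ℝ)) ∧
    ∀ (u : Bool → ℝ) (A : Bool → Frame), (∀ i, 0 < u i) →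
      ∀ pos0 : Bool → Pt, ∀ sched : ℕ → Bool → Bool, FairSched sched →
        Solves u A sched ⟨pos0, fun _ => St.start⟩ :=
  ⟨fun _ _ hu _ hr _ hs _ _ hf => solves_of_start hu hr hs hf,
    fun _ _ hu _ _ hf => solves_of_start hu rfl rfl hf⟩
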